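/- arXiv:2004.07059 — 2 statements merged into one kernel-verified Lean document; each statement's English description precedes it below -/
import Mathlib

section
/- For every integer m ≥ 0, the code C(m, m, m, m, m) is an optimal Hermitian LCD quaternary [5m+2, 2, 4m+1] code. -/
open Finset

/-- The finite field with four elements. -/
abbrev F4 : Type := GaloisField 2 2

noncomputable instance : Fintype F4 := Fintype.ofFinite F4

lemma F4.card_eq : Fintype.card F4 = 4 := by
  simpa using GaloisField.card 2 2 (by norm_num)

lemma F4.exists_omega : ∃ x : F4, x ^ 2 + x + 1 = 0 := by
  classical
  obtain ⟨x, hx0, hx1⟩ : ∃ x : F4, x ≠ 0 ∧ x ≠ 1 := by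
    by_contra h
    push_neg at h
    have hsub : (Finset.univ : Finset F4) ⊆ {0, 1} := by
      intro x _
      rcases eq_or_ne x 0 with h0 | h0
      · simp [h0]
      · simp [h x h0]
    have h1 := Finset.card_le_card hsub
    have h2 : ({0, 1} : Finset F4).card ≤ 2 := (Finset.card_insert_le _ _).trans (by simp)
    have h3 : (Finset.univ : Finset F4).card = 4 := F4.card_eq
    omega
  refine ⟨x, ?_⟩
  have hx : x ^ Fintype.card F4 = x := FiniteField.pow_card x
  rw [F4.card_eq] at hx
  have hmul : x * (x - 1) * (x ^ 2 + x + 1) = 0 := by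
    have : x * (x - 1) * (x ^ 2 + x + 1) = x ^ 4 - x := by ring
    rw [this, hx, sub_self]
  rcases mul_eq_zero.mp hmul with h | h
  · rcases mul_eq_zero.mp h with h | h
    · exact absurd h hx0
    · exact absurd (sub_eq_zero.mp h) hx1
  · exact h

/-- A fixed root of `X² + X + 1` in `F₄`. -/
noncomputable def ω4 : F4 := Classical.choose F4.exists_omega

lemma ω4_spec : ω4 ^ 2 + ω4 + 1 = 0 := Classical.choose_spec F4.exists_omega

open scoped Classical in
/-- Hamming weight of a vector. -/
noncomputable def wt {n : ℕ} (x : Fin n → F4) : ℕ :=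
  (Finset.univ.filter fun i => x i ≠ 0).card

/-- `C` is a code with minimum (nonzero) weight `d`. -/
noncomputable def hasMinWeight {n : ℕ} (C : Submodule F4 (Fin n → F4)) (d : ℕ) : Prop :=
  (∀ x ∈ C, x ≠ 0 → d ≤ wt x) ∧ ∃ x ∈ C, x ≠ 0 ∧ wt x = d

/-- The Hermitian inner product on `F₄ⁿ`; the conjugate of `x` is `x²`. -/
noncomputable def hermInner {n : ℕ} (u v : Fin n → F4) : F4 := ∑ i, u i * (v i) ^ 2

/-- The Hermitian dual code. -/
noncomputable def hermDual {n : ℕ} (C : Submodule F4 (Fin n → F4)) : Submodule F4 (Fin n → F4) where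
  carrier := {x | ∀ y ∈ C, hermInner x y = 0}
  zero_mem' := by intro y hy; simp [hermInner]
  add_mem' := by
    intro a b ha hb y hy
    have := ha y hy
    have := hb y hy
    simp only [hermInner, Pi.add_apply, add_mul, Finset.sum_add_distrib] at *
    simp [*]
  smul_mem' := by
    intro c a ha y hy
    have h := ha y hy
    simp only [hermInner, Pi.smul_apply, smul_eq_mul, mul_assoc, ← Finset.mul_sum] at *
    simp [h]

/-- `C` is a Hermitian linear complementary dual code. -/
noncomputable def IsHermLCD {n : ℕ} (C : Submodule F4 (Fin n → F4)) : Prop :=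
  C ⊓ hermDual C = ⊥

/-- The monomial linear map given by a permutation of coordinates followed by a
multiplication of each coordinate by a scalar. -/
noncomputable def monoMap {n : ℕ} (σ : Equiv.Perm (Fin n)) (s : Fin n → F4) :
    (Fin n → F4) →ₗ[F4] (Fin n → F4) where
  toFun x := fun i => s i * x (σ i)
  map_add' a b := by funext i; simp [mul_add]
  map_smul' c a := by funext i; simp [smul_eq_mul]; ring

/-- Two codes are equivalent if one is obtained from the other by a permutation of the
coordinates and multiplication of coordinates by nonzero scalars. -/
noncomputable def codeEquiv {n : ℕ} (C C' : Submodule F4 (Fin n → F4)) : Prop :=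
  ∃ (σ : Equiv.Perm (Fin n)) (s : Fin n → F4),
    (∀ i, s i ≠ 0) ∧ Submodule.map (monoMap σ s) C = C'

/-- First row of the generator matrix `G(a₁, a₂, a₃, a₄, a₅)`. -/
noncomputable def row1 (n a₁ : ℕ) : Fin n → F4 := fun i =>
  if i.val = 0 then 1
  else if i.val < 2 + a₁ then 0
  else 1

/-- Second row of the generator matrix `G(a₁, a₂, a₃, a₄, a₅)`. -/
noncomputable def row2 (n a₁ a₂ a₃ a₄ : ℕ) : Fin n → F4 := fun i =>
  if i.val = 0 then 0
  else if i.val < 2 + a₁ then 1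
  else if i.val < 2 + a₁ + a₂ then 0
  else if i.val < 2 + a₁ + a₂ + a₃ then 1
  else if i.val < 2 + a₁ + a₂ + a₃ + a₄ then ω4
  else ω4 ^ 2

set_option linter.unusedVariables false in
/-- The code `C(a₁, a₂, a₃, a₄, a₅)`, of length `n = 2 + a₁ + a₂ + a₃ + a₄ + a₅`:
the span of the rows of the generator matrix `G(a₁, a₂, a₃, a₄, a₅)` whose columns are
`(1,0)ᵀ`, `(0,1)ᵀ`, `a₁` columns `(0,1)ᵀ`, `a₂` columns `(1,0)ᵀ`, `a₃` columns `(1,1)ᵀ`,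
`a₄` columns `(1,ω)ᵀ` and `a₅` columns `(1,ω²)ᵀ`. -/
noncomputable def Ccode (n a₁ a₂ a₃ a₄ a₅ : ℕ) : Submodule F4 (Fin n → F4) :=
  Submodule.span F4 {row1 n a₁, row2 n a₁ a₂ a₃ a₄}

/-- The largest minimum weight among Hermitian LCD `[n,2]` codes. -/
def optimalDist (n : ℕ) : ℕ :=
  if n % 5 = 1 ∨ n % 5 = 2 ∨ n % 5 = 3 then 4 * n / 5 else 4 * n / 5 - 1

/-- `C` is an optimal Hermitian LCD `[n, 2, d]` code. -/
noncomputable def IsOptimalLCD (n d : ℕ) (C : Submodule F4 (Fin n → F4)) : Prop :=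
  Module.finrank F4 C = 2 ∧ hasMinWeight C d ∧ IsHermLCD C ∧ d = optimalDist n

/-- The linear map appending a zero coordinate: `x ↦ (x, 0)`. -/
noncomputable def extendZero (m : ℕ) : (Fin m → F4) →ₗ[F4] (Fin (m + 1) → F4) where
  toFun x := Fin.snoc x 0
  map_add' a b := by
    funext i
    refine Fin.lastCases ?_ ?_ i <;> simp
  map_smul' c a := by
    funext i
    refine Fin.lastCases ?_ ?_ i <;> simp

/-!
Apart from the first two, the columns of `G(m, m, m, m, m)` run `m` times through
`(1,0), (0,1), (1,1), (1,ω), (1,ω²)`, representatives of the five points of the projective line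
over `F₄`. Since `∑ p p̄ᵀ` over these points vanishes, the Hermitian Gram matrix of the two rows is
the identity, which gives dimension `2` and the LCD property. A nonzero linear form vanishes at
no more than one of the five points, so every nonzero codeword has weight at least `4m + 1`,
attained by the first row; and `4m + 1 = ⌊4(5m + 2)/5⌋`.
-/

lemma ω4_ne_zero : ω4 ≠ 0 := by
  intro h
  simpa [h] using ω4_spec

lemma ω4_ne_one : ω4 ≠ 1 := by
  intro h
  apply one_ne_zero (α := F4)
  linear_combination ω4_spec - (ω4 + 2) * h - CharP.cast_eq_zero F4 2

lemma ω4_sq_ne_one : ω4 ^ 2 ≠ 1 := by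
  intro h
  apply ω4_ne_zero
  linear_combination ω4_spec - h - CharP.cast_eq_zero F4 2

lemma ω4_sq_ne_self : ω4 ^ 2 ≠ ω4 := by
  intro h
  apply one_ne_zero (α := F4)
  linear_combination ω4_spec - h - ω4 * CharP.cast_eq_zero F4 2

lemma hermInner_add_left {n : ℕ} (x y z : Fin n → F4) :
    hermInner (x + y) z = hermInner x z + hermInner y z := by
  simp only [hermInner, Pi.add_apply, add_mul, Finset.sum_add_distrib]

lemma hermInner_smul_left {n : ℕ} (c : F4) (x z : Fin n → F4) :
    hermInner (c • x) z = c * hermInner x z := by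
  simp only [hermInner, Pi.smul_apply, smul_eq_mul, mul_assoc, Finset.mul_sum]

lemma hermForm_sum_projLine_eq_zero (a b c d : F4) :
    a * c ^ 2 + b * d ^ 2 + (a + b) * (c + d) ^ 2 + (a + b * ω4) * (c + d * ω4) ^ 2
      + (a + b * ω4 ^ 2) * (c + d * ω4 ^ 2) ^ 2 = 0 := by
  grind [ω4_spec]

open scoped Classical in
lemma four_le_card_nonvanishing {a b : F4} (hab : a ≠ 0 ∨ b ≠ 0) :
    4 ≤ (if a ≠ 0 then 1 else 0) + (if b ≠ 0 then 1 else 0) + (if a + b ≠ 0 then 1 else 0)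
      + (if a + b * ω4 ≠ 0 then 1 else 0) + (if a + b * ω4 ^ 2 ≠ 0 then 1 else 0) := by
  rcases eq_or_ne b 0 with rfl | hb
  · simp [hab.resolve_right (not_not.mpr rfl)]
  split_ifs <;> first | omega | grind [ω4_ne_zero, ω4_ne_one, ω4_sq_ne_one, ω4_sq_ne_self]

section OrthonormalPair

variable {n : ℕ} {u v : Fin n → F4}

def IsHermOrthonormalPair (u v : Fin n → F4) : Prop :=
  hermInner u u = 1 ∧ hermInner u v = 0 ∧ hermInner v u = 0 ∧ hermInner v v = 1

namespace IsHermOrthonormalPair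

lemma hermInner_comb_left (h : IsHermOrthonormalPair u v) (a b : F4) :
    hermInner (a • u + b • v) u = a := by
  rw [hermInner_add_left, hermInner_smul_left, hermInner_smul_left, h.1, h.2.2.1]
  ring

lemma symm (h : IsHermOrthonormalPair u v) : IsHermOrthonormalPair v u :=
  ⟨h.2.2.2, h.2.2.1, h.2.1, h.1⟩

lemma hermInner_comb_right (h : IsHermOrthonormalPair u v) (a b : F4) :
    hermInner (a • u + b • v) v = b := by
  rw [add_comm, h.symm.hermInner_comb_left]

lemma eq_zero_of_comb_eq_zero (h : IsHermOrthonormalPair u v) {a b : F4}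
    (hab : a • u + b • v = 0) : a = 0 ∧ b = 0 := by
  have hzero : ∀ w : Fin n → F4, hermInner 0 w = 0 := fun w => by simp [hermInner]
  exact ⟨by rw [← h.hermInner_comb_left a b, hab, hzero],
    by rw [← h.hermInner_comb_right a b, hab, hzero]⟩

lemma finrank_span (h : IsHermOrthonormalPair u v) :
    Module.finrank F4 (Submodule.span F4 {u, v}) = 2 := by
  have hli : LinearIndependent F4 ![u, v] :=
    LinearIndependent.pair_iff.mpr fun _ _ hst => h.eq_zero_of_comb_eq_zero hst
  rw [← Matrix.range_cons_cons_empty u v ![]]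
  exact finrank_span_eq_card hli

lemma isHermLCD_span (h : IsHermOrthonormalPair u v) : IsHermLCD (Submodule.span F4 {u, v}) := by
  refine eq_bot_iff.mpr fun x hx => ?_
  obtain ⟨hxC, hxD⟩ := Submodule.mem_inf.mp hx
  obtain ⟨a, b, rfl⟩ := Submodule.mem_span_pair.mp hxC
  have ha : a = 0 := by
    rw [← h.hermInner_comb_left a b]
    exact hxD u (Submodule.subset_span (by simp))
  have hb : b = 0 := by
    rw [← h.hermInner_comb_right a b]
    exact hxD v (Submodule.subset_span (by simp))
  simp [ha, hb]

end IsHermOrthonormalPair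

end OrthonormalPair

/-- Column `j` of the generator matrix `G(a₁, a₂, a₃, a₄, a₅)`. -/
noncomputable def genCol (a₁ a₂ a₃ a₄ : ℕ) (j : ℕ) : F4 × F4 :=
  if j = 0 then (1, 0)
  else if j < 2 + a₁ then (0, 1)
  else if j < 2 + a₁ + a₂ then (1, 0)
  else if j < 2 + a₁ + a₂ + a₃ then (1, 1)
  else if j < 2 + a₁ + a₂ + a₃ + a₄ then (1, ω4)
  else (1, ω4 ^ 2)

section GeneratorMatrix

variable {n a₁ a₂ a₃ a₄ a₅ : ℕ}

lemma row1_apply (i : Fin n) : row1 n a₁ i = (genCol a₁ a₂ a₃ a₄ i).1 := by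
  unfold row1 genCol
  split_ifs <;> rfl

lemma row2_apply (i : Fin n) : row2 n a₁ a₂ a₃ a₄ i = (genCol a₁ a₂ a₃ a₄ i).2 := by
  unfold row2 genCol
  split_ifs <;> rfl

lemma comb_rows_apply (a b : F4) (i : Fin n) :
    (a • row1 n a₁ + b • row2 n a₁ a₂ a₃ a₄) i =
      a * (genCol a₁ a₂ a₃ a₄ i).1 + b * (genCol a₁ a₂ a₃ a₄ i).2 := by
  simp only [Pi.add_apply, Pi.smul_apply, smul_eq_mul,
    row1_apply (a₂ := a₂) (a₃ := a₃) (a₄ := a₄), row2_apply]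

lemma sum_genCol {M : Type*} [AddCommMonoid M] (hn : n = 2 + a₁ + a₂ + a₃ + a₄ + a₅)
    (φ : F4 × F4 → M) :
    ∑ i : Fin n, φ (genCol a₁ a₂ a₃ a₄ i) =
      (1 + a₂) • φ (1, 0) + (1 + a₁) • φ (0, 1) + a₃ • φ (1, 1) + a₄ • φ (1, ω4)
        + a₅ • φ (1, ω4 ^ 2) := by
  subst hn
  have block : ∀ (N k : ℕ) (p : F4 × F4), (∀ x < k, genCol a₁ a₂ a₃ a₄ (N + x) = p) →
      ∑ x ∈ Finset.range k, φ (genCol a₁ a₂ a₃ a₄ (N + x)) = k • φ p := by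
    intro N k p h
    rw [Finset.sum_eq_card_nsmul fun x hx => congrArg φ (h x (Finset.mem_range.mp hx)),
      Finset.card_range]
  rw [Fin.sum_univ_eq_sum_range (fun j => φ (genCol a₁ a₂ a₃ a₄ j)),
    Finset.sum_range_add, Finset.sum_range_add, Finset.sum_range_add, Finset.sum_range_add,
    show 2 + a₁ = 1 + (1 + a₁) by ring, Finset.sum_range_add, Finset.sum_range_one]
  rw [block _ _ (0, 1), block _ _ (1, 0), block _ _ (1, 1), block _ _ (1, ω4),
    block _ _ (1, ω4 ^ 2)]
  · simp only [genCol, if_pos, add_nsmul, one_nsmul]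
    abel
  all_goals intro x hx; unfold genCol; split_ifs <;> first | rfl | omega

open scoped Classical in
lemma wt_comb_rows (hn : n = 2 + a₁ + a₂ + a₃ + a₄ + a₅) (a b : F4) :
    wt (a • row1 n a₁ + b • row2 n a₁ a₂ a₃ a₄) =
      (1 + a₂) * (if a ≠ 0 then 1 else 0) + (1 + a₁) * (if b ≠ 0 then 1 else 0)
        + a₃ * (if a + b ≠ 0 then 1 else 0) + a₄ * (if a + b * ω4 ≠ 0 then 1 else 0)
        + a₅ * (if a + b * ω4 ^ 2 ≠ 0 then 1 else 0) := by
  rw [wt, Finset.card_filter]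
  simp_rw [comb_rows_apply]
  rw [sum_genCol hn (fun p => if a * p.1 + b * p.2 ≠ 0 then 1 else 0)]
  simp only [smul_eq_mul, mul_one, mul_zero, add_zero, zero_add]

lemma hermInner_comb_rows (hn : n = 2 + a₁ + a₂ + a₃ + a₄ + a₅) (a b c d : F4) :
    hermInner (a • row1 n a₁ + b • row2 n a₁ a₂ a₃ a₄)
        (c • row1 n a₁ + d • row2 n a₁ a₂ a₃ a₄) =
      (1 + a₂) • (a * c ^ 2) + (1 + a₁) • (b * d ^ 2) + a₃ • ((a + b) * (c + d) ^ 2)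
        + a₄ • ((a + b * ω4) * (c + d * ω4) ^ 2)
        + a₅ • ((a + b * ω4 ^ 2) * (c + d * ω4 ^ 2) ^ 2) := by
  rw [hermInner]
  simp_rw [comb_rows_apply]
  rw [sum_genCol hn (fun p => (a * p.1 + b * p.2) * (c * p.1 + d * p.2) ^ 2)]
  simp only [mul_one, mul_zero, add_zero, zero_add]

end GeneratorMatrix

section UniformMultiplicities

variable (m : ℕ)

lemma five_mul_add_two_eq : 5 * m + 2 = 2 + m + m + m + m + m := by ring

lemma hermInner_comb_rows_uniform (a b c d : F4) :
    hermInner (a • row1 (5 * m + 2) m + b • row2 (5 * m + 2) m m m m)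
      (c • row1 (5 * m + 2) m + d • row2 (5 * m + 2) m m m m) = a * c ^ 2 + b * d ^ 2 := by
  rw [hermInner_comb_rows (five_mul_add_two_eq m), add_nsmul, add_nsmul, one_nsmul, one_nsmul]
  linear_combination m • hermForm_sum_projLine_eq_zero a b c d

lemma isHermOrthonormalPair_rows_uniform :
    IsHermOrthonormalPair (row1 (5 * m + 2) m) (row2 (5 * m + 2) m m m m) := by
  refine ⟨?_, ?_, ?_, ?_⟩
  · simpa using hermInner_comb_rows_uniform m 1 0 1 0
  · simpa using hermInner_comb_rows_uniform m 1 0 0 1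
  · simpa using hermInner_comb_rows_uniform m 0 1 1 0
  · simpa using hermInner_comb_rows_uniform m 0 1 0 1

lemma wt_row1_uniform : wt (row1 (5 * m + 2) m) = 4 * m + 1 := by
  rw [show 4 * m + 1 = (1 + m) * 1 + (1 + m) * 0 + m * 1 + m * 1 + m * 1 by ring]
  simpa using wt_comb_rows (a₅ := m) (five_mul_add_two_eq m) 1 0

open scoped Classical in
lemma le_wt_comb_rows_uniform {a b : F4}
    (hab : a • row1 (5 * m + 2) m + b • row2 (5 * m + 2) m m m m ≠ 0) :
    4 * m + 1 ≤ wt (a • row1 (5 * m + 2) m + b • row2 (5 * m + 2) m m m m) := by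
  have hab' : a ≠ 0 ∨ b ≠ 0 := by
    by_contra! h
    simp [h.1, h.2] at hab
  have h4 := Nat.mul_le_mul_left m (four_le_card_nonvanishing hab')
  have h1 : 1 ≤ (if a ≠ 0 then 1 else 0) + (if b ≠ 0 then 1 else 0) := by
    rcases hab' with h | h <;> simp [h]
  rw [wt_comb_rows (five_mul_add_two_eq m)]
  linarith

end UniformMultiplicities

/-- `C(m, m, m, m, m)` is an optimal Hermitian LCD `[5m + 2, 2, 4m + 1]`
code for every `m ≥ 0`. -/
theorem stmt15 (m : ℕ) :
    IsOptimalLCD (5 * m + 2) (4 * m + 1) (Ccode (5 * m + 2) m m m m m) := by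
  have hrows := isHermOrthonormalPair_rows_uniform m
  refine ⟨hrows.finrank_span,
    ⟨?_, row1 _ m, Submodule.subset_span (by simp), ?_, wt_row1_uniform m⟩,
    hrows.isHermLCD_span, ?_⟩
  · intro x hx hx0
    obtain ⟨a, b, rfl⟩ := Submodule.mem_span_pair.mp hx
    exact le_wt_comb_rows_uniform m hx0
  · intro h
    simpa [row1] using congrFun h 0
  · simp only [optimalDist]
    split_ifs <;> omega
end

section
/- For every integer m ≥ 1, the code C(m, m−1, m+1, m+1, m) is an optimal Hermitian LCD quaternary [5m+3, 2, 4m+2] code. -/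
open Finset

-- ===== Auxiliary lemmas =====

lemma F4.two_eq_zero : (2 : F4) = 0 := by
  have := CharP.cast_eq_zero F4 2
  simpa using this

lemma F4.cast_even {t : ℕ} (h : t % 2 = 0) : (t : F4) = 0 := by
  obtain ⟨k, rfl⟩ : ∃ k, t = 2 * k := ⟨t / 2, by omega⟩
  push_cast
  rw [F4.two_eq_zero]; ring

lemma F4.cast_odd {t : ℕ} (h : t % 2 = 1) : (t : F4) = 1 := by
  obtain ⟨k, rfl⟩ : ∃ k, t = 2 * k + 1 := ⟨t / 2, by omega⟩
  push_cast
  rw [F4.two_eq_zero]; ring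

lemma ω4_sq : ω4 ^ 2 = ω4 + 1 := by
  linear_combination ω4_spec - (ω4 + 1) * F4.two_eq_zero

lemma ω4_sq_ne_zero : ω4 ^ 2 ≠ 0 := pow_ne_zero 2 ω4_ne_zero

lemma ω4_ne_sq : ω4 ≠ ω4 ^ 2 := by
  rw [ω4_sq]
  intro h
  have : (1 : F4) = 0 := by linear_combination -h
  simp at this

lemma sum_blocks {M : Type*} [AddCommMonoid M] (m : ℕ) (hm : 1 ≤ m) (g : ℕ → M)
    (c0 c1 c2 c3 c4 c5 : M)
    (h0 : g 0 = c0)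
    (h1 : ∀ j, 1 ≤ j → j < 2 + m → g j = c1)
    (h2 : ∀ j, 2 + m ≤ j → j < 1 + 2 * m → g j = c2)
    (h3 : ∀ j, 1 + 2 * m ≤ j → j < 2 + 3 * m → g j = c3)
    (h4 : ∀ j, 2 + 3 * m ≤ j → j < 3 + 4 * m → g j = c4)
    (h5 : ∀ j, 3 + 4 * m ≤ j → j < 5 * m + 3 → g j = c5) :
    ∑ i : Fin (5 * m + 3), g i.val =
      c0 + (m + 1) • c1 + (m - 1) • c2 + (m + 1) • c3 + (m + 1) • c4 + m • c5 := by
  rw [Fin.sum_univ_eq_sum_range, Finset.range_eq_Ico]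
  rw [← Finset.sum_Ico_consecutive g (by omega : 0 ≤ 3 + 4 * m) (by omega : 3 + 4 * m ≤ 5 * m + 3)]
  rw [← Finset.sum_Ico_consecutive g (by omega : 0 ≤ 2 + 3 * m) (by omega : 2 + 3 * m ≤ 3 + 4 * m)]
  rw [← Finset.sum_Ico_consecutive g (by omega : 0 ≤ 1 + 2 * m) (by omega : 1 + 2 * m ≤ 2 + 3 * m)]
  rw [← Finset.sum_Ico_consecutive g (by omega : 0 ≤ 2 + m) (by omega : 2 + m ≤ 1 + 2 * m)]
  rw [← Finset.sum_Ico_consecutive g (by omega : 0 ≤ 1) (by omega : 1 ≤ 2 + m)]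
  have p0 : ∑ j ∈ Finset.Ico 0 1, g j = c0 := by simp [h0]
  have pc : ∀ (l u : ℕ) (c : M), (∀ j, l ≤ j → j < u → g j = c) →
      ∑ j ∈ Finset.Ico l u, g j = (u - l) • c := by
    intro l u c hc
    rw [Finset.sum_congr rfl fun j hj => hc j (Finset.mem_Ico.mp hj).1 (Finset.mem_Ico.mp hj).2,
      Finset.sum_const, Nat.card_Ico]
  rw [p0, pc 1 (2 + m) c1 h1, pc (2 + m) (1 + 2 * m) c2 h2, pc (1 + 2 * m) (2 + 3 * m) c3 h3,
    pc (2 + 3 * m) (3 + 4 * m) c4 h4, pc (3 + 4 * m) (5 * m + 3) c5 h5]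
  have e1 : 2 + m - 1 = m + 1 := by omega
  have e2 : 1 + 2 * m - (2 + m) = m - 1 := by omega
  have e3 : 2 + 3 * m - (1 + 2 * m) = m + 1 := by omega
  have e4 : 3 + 4 * m - (2 + 3 * m) = m + 1 := by omega
  have e5 : 5 * m + 3 - (3 + 4 * m) = m := by omega
  rw [e1, e2, e3, e4, e5]

noncomputable def R1f (a₁ j : ℕ) : F4 := if j = 0 then 1 else if j < 2 + a₁ then 0 else 1
noncomputable def R2f (a₁ a₂ a₃ a₄ j : ℕ) : F4 :=
  if j = 0 then 0
  else if j < 2 + a₁ then 1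
  else if j < 2 + a₁ + a₂ then 0
  else if j < 2 + a₁ + a₂ + a₃ then 1
  else if j < 2 + a₁ + a₂ + a₃ + a₄ then ω4
  else ω4 ^ 2

lemma row1_eq (n a₁ : ℕ) (i : Fin n) : row1 n a₁ i = R1f a₁ i.val := rfl
lemma row2_eq (n a₁ a₂ a₃ a₄ : ℕ) (i : Fin n) :
    row2 n a₁ a₂ a₃ a₄ i = R2f a₁ a₂ a₃ a₄ i.val := rfl

section blocks
variable {m j : ℕ}

lemma R1f_B0 : R1f m 0 = 1 := by simp [R1f]
lemma R1f_B1 (h1 : 1 ≤ j) (h2 : j < 2 + m) : R1f m j = 0 := by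
  unfold R1f; split_ifs <;> first | rfl | (exfalso; omega)
lemma R1f_B25 (h1 : 2 + m ≤ j) : R1f m j = 1 := by
  unfold R1f; split_ifs <;> first | rfl | (exfalso; omega)

lemma R2f_B0 : R2f m (m-1) (m+1) (m+1) 0 = 0 := by simp [R2f]
lemma R2f_B1 (h1 : 1 ≤ j) (h2 : j < 2 + m) : R2f m (m-1) (m+1) (m+1) j = 1 := by
  unfold R2f; split_ifs <;> first | rfl | (exfalso; omega)
lemma R2f_B2 (hm : 1 ≤ m) (h1 : 2 + m ≤ j) (h2 : j < 1 + 2*m) : R2f m (m-1) (m+1) (m+1) j = 0 := by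
  unfold R2f; split_ifs <;> first | rfl | (exfalso; omega)
lemma R2f_B3 (hm : 1 ≤ m) (h1 : 1 + 2*m ≤ j) (h2 : j < 2 + 3*m) : R2f m (m-1) (m+1) (m+1) j = 1 := by
  unfold R2f; split_ifs <;> first | rfl | (exfalso; omega)
lemma R2f_B4 (hm : 1 ≤ m) (h1 : 2 + 3*m ≤ j) (h2 : j < 3 + 4*m) : R2f m (m-1) (m+1) (m+1) j = ω4 := by
  unfold R2f; split_ifs <;> first | rfl | (exfalso; omega)
lemma R2f_B5 (hm : 1 ≤ m) (h1 : 3 + 4*m ≤ j) : R2f m (m-1) (m+1) (m+1) j = ω4 ^ 2 := by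
  unfold R2f; split_ifs <;> first | rfl | (exfalso; omega)
end blocks

open scoped Classical in
lemma wt_eq (m : ℕ) (hm : 1 ≤ m) (a b : F4) :
    wt (a • row1 (5*m+3) m + b • row2 (5*m+3) m (m-1) (m+1) (m+1)) =
      (if a = 0 then 0 else 1) + (m+1) * (if b = 0 then 0 else 1)
      + (m-1) * (if a = 0 then 0 else 1)
      + (m+1) * (if a + b = 0 then 0 else 1) + (m+1) * (if a + b*ω4 = 0 then 0 else 1)
      + m * (if a + b*ω4^2 = 0 then 0 else 1) := by
  classical
  have hx : ∀ i : Fin (5*m+3),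
      (a • row1 (5*m+3) m + b • row2 (5*m+3) m (m-1) (m+1) (m+1)) i
        = a * R1f m i.val + b * R2f m (m-1) (m+1) (m+1) i.val := by
    intro i
    simp [row1_eq, row2_eq]
  have key : wt (a • row1 (5*m+3) m + b • row2 (5*m+3) m (m-1) (m+1) (m+1))
      = ∑ i : Fin (5*m+3),
        (fun j => if a * R1f m j + b * R2f m (m-1) (m+1) (m+1) j = 0 then 0 else 1) i.val := by
    rw [wt, Finset.card_filter]
    refine Finset.sum_congr rfl fun i _ => ?_
    rw [hx i]
    by_cases h : a * R1f m i.val + b * R2f m (m-1) (m+1) (m+1) i.val = 0 <;> simp [h]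
  rw [key]
  rw [sum_blocks m hm (fun j => if a * R1f m j + b * R2f m (m-1) (m+1) (m+1) j = 0 then 0 else 1) (if a = 0 then 0 else 1) (if b = 0 then 0 else 1)
      (if a = 0 then 0 else 1) (if a + b = 0 then 0 else 1) (if a + b*ω4 = 0 then 0 else 1)
      (if a + b*ω4^2 = 0 then 0 else 1)]
  · simp [smul_eq_mul, mul_comm]
  · simp [R1f_B0, R2f_B0]
  · intro j h1 h2; rw [R1f_B1 h1 h2, R2f_B1 h1 h2]; simp
  · intro j h1 h2; rw [R1f_B25 (by omega), R2f_B2 hm h1 h2]; simp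
  · intro j h1 h2; rw [R1f_B25 (by omega), R2f_B3 hm h1 h2]; simp
  · intro j h1 h2; rw [R1f_B25 (by omega), R2f_B4 hm h1 h2]; simp
  · intro j h1 h2; rw [R1f_B25 (by omega), R2f_B5 hm h1]; simp

lemma herm_r1 (m : ℕ) (hm : 1 ≤ m) (a b : F4) :
    hermInner (a • row1 (5*m+3) m + b • row2 (5*m+3) m (m-1) (m+1) (m+1))
      (row1 (5*m+3) m) = b * ω4 ^ 2 := by
  have key : hermInner (a • row1 (5*m+3) m + b • row2 (5*m+3) m (m-1) (m+1) (m+1))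
      (row1 (5*m+3) m)
      = ∑ i : Fin (5*m+3), (fun j => (a * R1f m j + b * R2f m (m-1) (m+1) (m+1) j)
          * (R1f m j) ^ 2) i.val := by
    rw [hermInner]
    refine Finset.sum_congr rfl fun i _ => ?_
    simp [row1_eq, row2_eq]
  rw [key]
  rw [sum_blocks m hm (fun j => (a * R1f m j + b * R2f m (m-1) (m+1) (m+1) j) * (R1f m j) ^ 2)
      a 0 a (a + b) (a + b * ω4) (a + b * ω4 ^ 2)]
  · simp only [nsmul_eq_mul, smul_zero, mul_zero]
    rcases Nat.even_or_odd m with he | ho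
    · have h2 := Nat.even_iff.mp he
      rw [F4.cast_odd (show (m+1) % 2 = 1 by omega), F4.cast_odd (show (m-1) % 2 = 1 by omega),
        F4.cast_even (show m % 2 = 0 by omega)]
      linear_combination (2*a + b + b*ω4) * F4.two_eq_zero - b * ω4_spec
    · have h2 := Nat.odd_iff.mp ho
      rw [F4.cast_even (show (m+1) % 2 = 0 by omega), F4.cast_even (show (m-1) % 2 = 0 by omega),
        F4.cast_odd (show m % 2 = 1 by omega)]
      linear_combination a * F4.two_eq_zero
  · simp [R1f_B0, R2f_B0]
  · intro j h1 h2; rw [R1f_B1 h1 h2, R2f_B1 h1 h2]; ring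
  · intro j h1 h2; rw [R1f_B25 (by omega), R2f_B2 hm h1 h2]; ring
  · intro j h1 h2; rw [R1f_B25 (by omega), R2f_B3 hm h1 h2]; ring
  · intro j h1 h2; rw [R1f_B25 (by omega), R2f_B4 hm h1 h2]; ring
  · intro j h1 h2; rw [R1f_B25 (by omega), R2f_B5 hm h1]; ring

lemma herm_r2 (m : ℕ) (hm : 1 ≤ m) (a b : F4) :
    hermInner (a • row1 (5*m+3) m + b • row2 (5*m+3) m (m-1) (m+1) (m+1))
      (row2 (5*m+3) m (m-1) (m+1) (m+1)) = a * ω4 + b := by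
  have key : hermInner (a • row1 (5*m+3) m + b • row2 (5*m+3) m (m-1) (m+1) (m+1))
      (row2 (5*m+3) m (m-1) (m+1) (m+1))
      = ∑ i : Fin (5*m+3), (fun j => (a * R1f m j + b * R2f m (m-1) (m+1) (m+1) j)
          * (R2f m (m-1) (m+1) (m+1) j) ^ 2) i.val := by
    rw [hermInner]
    refine Finset.sum_congr rfl fun i _ => ?_
    simp [row1_eq, row2_eq]
  rw [key]
  rw [sum_blocks m hm (fun j => (a * R1f m j + b * R2f m (m-1) (m+1) (m+1) j)
        * (R2f m (m-1) (m+1) (m+1) j) ^ 2)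
      0 b 0 (a + b) ((a + b * ω4) * ω4 ^ 2) ((a + b * ω4 ^ 2) * (ω4 ^ 2) ^ 2)]
  · simp only [nsmul_eq_mul, smul_zero, mul_zero, zero_add]
    rcases Nat.even_or_odd m with he | ho
    · have h2 := Nat.even_iff.mp he
      rw [F4.cast_odd (show (m+1) % 2 = 1 by omega) ,
        F4.cast_even (show m % 2 = 0 by omega)]
      linear_combination (b*ω4 + a - b) * ω4_spec + (b - a*ω4) * F4.two_eq_zero
    · have h2 := Nat.odd_iff.mp ho
      rw [F4.cast_even (show (m+1) % 2 = 0 by omega) ,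
        F4.cast_odd (show m % 2 = 1 by omega)]
      linear_combination (a*ω4*(ω4-1) + b*(ω4-1)*(ω4^3+1)) * ω4_spec
  · simp [R1f_B0, R2f_B0]
  · intro j h1 h2; rw [R1f_B1 h1 h2, R2f_B1 h1 h2]; ring
  · intro j h1 h2; rw [R1f_B25 (by omega), R2f_B2 hm h1 h2]; ring
  · intro j h1 h2; rw [R1f_B25 (by omega), R2f_B3 hm h1 h2]; ring
  · intro j h1 h2; rw [R1f_B25 (by omega), R2f_B4 hm h1 h2]; ring
  · intro j h1 h2; rw [R1f_B25 (by omega), R2f_B5 hm h1]; ring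

lemma mem_hermDual {n : ℕ} {C : Submodule F4 (Fin n → F4)} {x : Fin n → F4} :
    x ∈ hermDual C ↔ ∀ y ∈ C, hermInner x y = 0 := Iff.rfl

/-- `C(m, m - 1, m + 1, m + 1, m)` is an optimal Hermitian LCD
`[5m + 3, 2, 4m + 2]` code for every `m ≥ 1`. -/
theorem stmt16 (m : ℕ) (hm : 1 ≤ m) :
    IsOptimalLCD (5 * m + 3) (4 * m + 2)
      (Ccode (5 * m + 3) m (m - 1) (m + 1) (m + 1) m) := by
  classical
  have hr1mem : row1 (5*m+3) m ∈ Ccode (5*m+3) m (m-1) (m+1) (m+1) m :=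
    Submodule.subset_span (by simp)
  have hr2mem : row2 (5*m+3) m (m-1) (m+1) (m+1) ∈ Ccode (5*m+3) m (m-1) (m+1) (m+1) m :=
    Submodule.subset_span (by simp)
  have hspan : ∀ x, x ∈ Ccode (5*m+3) m (m-1) (m+1) (m+1) m ↔
      ∃ a b : F4, a • row1 (5*m+3) m + b • row2 (5*m+3) m (m-1) (m+1) (m+1) = x :=
    fun x => Submodule.mem_span_pair
  refine ⟨?_, ⟨?_, ?_⟩, ?_, ?_⟩
  · -- finrank = 2
    have hind : LinearIndependent F4 ![row1 (5*m+3) m, row2 (5*m+3) m (m-1) (m+1) (m+1)] := by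
      rw [LinearIndependent.pair_iff]
      intro s t h
      have h0 := congrFun h ⟨0, by omega⟩
      have h1 := congrFun h ⟨1, by omega⟩
      simp [row1, row2, show (1:ℕ) < 2 + m by omega] at h0 h1
      exact ⟨h0, h1⟩
    have hrange : Set.range ![row1 (5*m+3) m, row2 (5*m+3) m (m-1) (m+1) (m+1)]
        = {row1 (5*m+3) m, row2 (5*m+3) m (m-1) (m+1) (m+1)} := by
      ext x
      simp only [Set.mem_range, Fin.exists_fin_two, Matrix.cons_val_zero, Matrix.cons_val_one,
        Matrix.head_cons, Set.mem_insert_iff, Set.mem_singleton_iff, eq_comm]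
    have : Ccode (5*m+3) m (m-1) (m+1) (m+1) m
        = Submodule.span F4 (Set.range ![row1 (5*m+3) m, row2 (5*m+3) m (m-1) (m+1) (m+1)]) := by
      rw [Ccode, hrange]
    rw [this, finrank_span_eq_card hind]
    simp
  · -- lower bound on weight
    intro x hxC hx0
    obtain ⟨a, b, rfl⟩ := (hspan x).mp hxC
    rw [wt_eq m hm a b]
    rcases eq_or_ne a 0 with ha | ha
    · rcases eq_or_ne b 0 with hb | hb
      · exact absurd (by simp [ha, hb]) hx0
      · have h1 : a + b ≠ 0 := by simpa [ha] using hb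
        have h2 : a + b * ω4 ≠ 0 := by
          simp only [ha, zero_add]
          exact mul_ne_zero hb ω4_ne_zero
        have h3 : a + b * ω4 ^ 2 ≠ 0 := by
          simp only [ha, zero_add]
          exact mul_ne_zero hb ω4_sq_ne_zero
        simp [ha, hb, h1, h2, h3, ω4_ne_zero, ω4_sq_ne_zero]
        omega
    · rcases eq_or_ne b 0 with hb | hb
      · have h1 : a + b ≠ 0 := by simpa [hb] using ha
        have h2 : a + b * ω4 ≠ 0 := by simpa [hb] using ha
        have h3 : a + b * ω4 ^ 2 ≠ 0 := by simpa [hb] using ha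
        simp [ha, hb, h1, h2, h3]
        omega
      · -- both nonzero: at most one of the three sums vanishes
        have excl : ∀ x y : F4, x ≠ y →
            ¬(a + b * x = 0 ∧ a + b * y = 0) := by
          rintro x y hxy ⟨hx, hy⟩
          have hbxy : b * (x - y) = 0 := by linear_combination hx - hy
          rcases mul_eq_zero.mp hbxy with h | h
          · exact hb h
          · exact hxy (sub_eq_zero.mp h)
        have e12 : ¬(a + b = 0 ∧ a + b * ω4 = 0) := by
          have := excl 1 ω4 (fun h => ω4_ne_one h.symm)
          simpa using this
        have e13 : ¬(a + b = 0 ∧ a + b * ω4 ^ 2 = 0) := by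
          have := excl 1 (ω4 ^ 2) (fun h => ω4_sq_ne_one h.symm)
          simpa using this
        have e23 : ¬(a + b * ω4 = 0 ∧ a + b * ω4 ^ 2 = 0) := excl ω4 (ω4 ^ 2) ω4_ne_sq
        by_cases h1 : a + b = 0
        · have h2 : a + b * ω4 ≠ 0 := fun h => e12 ⟨h1, h⟩
          have h3 : a + b * ω4 ^ 2 ≠ 0 := fun h => e13 ⟨h1, h⟩
          simp [ha, hb, h1, h2, h3]
          omega
        · by_cases h2 : a + b * ω4 = 0
          · have h3 : a + b * ω4 ^ 2 ≠ 0 := fun h => e23 ⟨h2, h⟩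
            simp [ha, hb, h1, h2, h3]
            omega
          · by_cases h3 : a + b * ω4 ^ 2 = 0 <;> simp [ha, hb, h1, h2, h3] <;> omega
  · -- witness of weight 4m+2
    refine ⟨row1 (5*m+3) m, hr1mem, ?_, ?_⟩
    · intro h
      have := congrFun h ⟨0, by omega⟩
      simp [row1] at this
    · have hrw : row1 (5*m+3) m
          = (1:F4) • row1 (5*m+3) m + (0:F4) • row2 (5*m+3) m (m-1) (m+1) (m+1) := by
        simp
      rw [hrw, wt_eq m hm 1 0]
      simp
      omega
  · -- Hermitian LCD
    rw [IsHermLCD, eq_bot_iff]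
    rintro x hx
    obtain ⟨hxC, hxD⟩ := Submodule.mem_inf.mp hx
    obtain ⟨a, b, rfl⟩ := (hspan x).mp hxC
    have d1 := mem_hermDual.mp hxD _ hr1mem
    have d2 := mem_hermDual.mp hxD _ hr2mem
    rw [herm_r1 m hm] at d1
    rw [herm_r2 m hm] at d2
    have hb : b = 0 := by
      rcases mul_eq_zero.mp d1 with h | h
      · exact h
      · exact absurd h ω4_sq_ne_zero
    have ha : a = 0 := by
      rw [hb, add_zero] at d2
      rcases mul_eq_zero.mp d2 with h | h
      · exact h
      · exact absurd h ω4_ne_zero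
    simp [ha, hb]
  · -- optimal distance
    rw [optimalDist, if_pos (by omega)]
    omega
end
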